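/- arXiv:1011.0782 — 2 statements merged into one kernel-verified Lean document; each statement's English description precedes it below -/
import Mathlib

section
/- Define sequences by the recurrence of continued fraction denominators for ξ = [0;1,1,3,overline{1,4}]. For all odd n ≥ 3, the denominators satisfy Bₙ = (1/4)(α₋ λ₊^{n/2} − α₊ λ₋^{n/2}) and B_{n−1} = (1/8)(β₋ λ₊^{n/2} + β₊ λ₋^{n/2}), where λ± = 3 ± 2√2, α± = 12 ± 7√2, β± = ±26 + 19√2. -/
open Real

lemma cf_key (x : ℝ) (hx : 0 ≤ x) (n : ℕ) : (x ^ 2 : ℝ) ^ ((n : ℝ) / 2) = x ^ n := by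
  rw [← Real.rpow_natCast x 2, ← Real.rpow_mul hx,
    ← Real.rpow_natCast x n]
  congr 1
  push_cast
  ring

/-- Closed form for the convergent denominators of ξ = [0;1,1,3,overline{1,4}]:
for odd n ≥ 3, Bₙ = (1/4)(α₋ λ₊^{n/2} − α₊ λ₋^{n/2}) and
B_{n−1} = (1/8)(β₋ λ₊^{n/2} + β₊ λ₋^{n/2}), with λ± = 3 ± 2√2,
α± = 12 ± 7√2, β± = ±26 + 19√2. -/
theorem cf_denominator_closed_form (a : ℕ → ℝ) (B : ℕ → ℝ)
    (ha1 : a 1 = 1) (ha2 : a 2 = 1) (ha3 : a 3 = 3)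
    (ha : ∀ n, 4 ≤ n → a n = if n % 2 = 0 then 1 else 4)
    (hB0 : B 0 = 1) (hB1 : B 1 = 1)
    (hBrec : ∀ n, 2 ≤ n → B n = a n * B (n - 1) + B (n - 2)) :
    ∀ n, Odd n → 3 ≤ n →
      B n = (1 / 4) * ((12 - 7 * Real.sqrt 2) * (3 + 2 * Real.sqrt 2) ^ ((n : ℝ) / 2)
        - (12 + 7 * Real.sqrt 2) * (3 - 2 * Real.sqrt 2) ^ ((n : ℝ) / 2)) ∧
      B (n - 1) = (1 / 8) * ((-26 + 19 * Real.sqrt 2) * (3 + 2 * Real.sqrt 2) ^ ((n : ℝ) / 2)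
        + (26 + 19 * Real.sqrt 2) * (3 - 2 * Real.sqrt 2) ^ ((n : ℝ) / 2)) := by
  set s := Real.sqrt 2 with hsdef
  have hs : s ^ 2 = 2 := Real.sq_sqrt (by norm_num)
  have hs0 : 0 ≤ s := Real.sqrt_nonneg 2
  have hs1 : 1 ≤ s := by nlinarith
  have e1 : (3 : ℝ) + 2 * s = (1 + s) ^ 2 := by linear_combination -hs
  have e2 : (3 : ℝ) - 2 * s = (s - 1) ^ 2 := by linear_combination -hs
  -- basic values
  have hB2 : B 2 = 2 := by
    have h := hBrec 2 (by norm_num)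
    norm_num [ha2, hB1, hB0] at h
    linarith
  have hB3 : B 3 = 7 := by
    have h := hBrec 3 (by norm_num)
    norm_num [ha3, hB2, hB1] at h
    linarith
  -- main induction, in nat-power form
  have main : ∀ k : ℕ,
      B (2 * k + 3) = (1 / 4) * ((12 - 7 * s) * (1 + s) ^ (2 * k + 3)
        - (12 + 7 * s) * (s - 1) ^ (2 * k + 3)) ∧
      B (2 * k + 2) = (1 / 8) * ((-26 + 19 * s) * (1 + s) ^ (2 * k + 3)
        + (26 + 19 * s) * (s - 1) ^ (2 * k + 3)) := by
    intro k
    induction k with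
    | zero =>
      norm_num
      constructor
      · rw [hB3]; linear_combination -(1 / 2 - 7 / 2 * s ^ 2) * hs
      · rw [hB2]; linear_combination -(17 / 4 + 19 / 4 * s ^ 2) * hs
    | succ k ih =>
      obtain ⟨h1, h2⟩ := ih
      have hr4 : B (2 * k + 4) = B (2 * k + 3) + B (2 * k + 2) := by
        have h := hBrec (2 * k + 4) (by omega)
        have ha' := ha (2 * k + 4) (by omega)
        rw [if_pos (by omega : (2 * k + 4) % 2 = 0)] at ha'
        rw [show 2 * k + 4 - 1 = 2 * k + 3 from by omega,
            show 2 * k + 4 - 2 = 2 * k + 2 from by omega, ha'] at h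
        linarith
      have hr5 : B (2 * k + 5) = 5 * B (2 * k + 3) + 4 * B (2 * k + 2) := by
        have h := hBrec (2 * k + 5) (by omega)
        have ha' := ha (2 * k + 5) (by omega)
        rw [if_neg (by omega : ¬ (2 * k + 5) % 2 = 0)] at ha'
        rw [show 2 * k + 5 - 1 = 2 * k + 4 from by omega,
            show 2 * k + 5 - 2 = 2 * k + 3 from by omega, ha', hr4] at h
        linarith
      rw [show 2 * (k + 1) + 3 = 2 * k + 5 from by ring,
          show 2 * (k + 1) + 2 = 2 * k + 4 from by ring]
      constructor
      · linear_combination hr5 + 5 * h1 + 4 * h2 +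
          ((1 / 2 + 7 / 4 * s) * (1 + s) ^ (2 * k + 3)
            + (-(1 / 2) + 7 / 4 * s) * (s - 1) ^ (2 * k + 3)) * hs
      · linear_combination hr4 + h1 + h2 -
          ((3 / 2 + 19 / 8 * s) * (1 + s) ^ (2 * k + 3)
            + (-(3 / 2) + 19 / 8 * s) * (s - 1) ^ (2 * k + 3)) * hs
  intro n hodd hge
  obtain ⟨m, rfl⟩ := hodd
  obtain ⟨k, rfl⟩ : ∃ k, m = k + 1 := ⟨m - 1, by omega⟩
  rw [show 2 * (k + 1) + 1 = 2 * k + 3 from by ring,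
      show 2 * k + 3 - 1 = 2 * k + 2 from by omega,
      e1, e2, cf_key (1 + s) (by linarith) (2 * k + 3),
      cf_key (s - 1) (by linarith) (2 * k + 3)]
  exact main k
end

section
/- Let ξ be irrational with convergents Aₙ/Bₙ and complete quotients ζₙ. For any integer c with 1 ≤ c < a_{n+2}, the intermediate convergent satisfies (cA_{n+1} + Aₙ)/(cB_{n+1} + Bₙ) − ξ = (ζ_{n+2} − c)(c + Bₙ/B_{n+1}) / ((ζ_{n+2} + Bₙ/B_{n+1}) (cB_{n+1} + Bₙ)²). -/
/-- Error formula for intermediate convergents: for 1 ≤ c < a_{n+2},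
(cA_{n+1} + Aₙ)/(cB_{n+1} + Bₙ) − ξ
  = (ζ_{n+2} − c)(c + Bₙ/B_{n+1}) / ((ζ_{n+2} + Bₙ/B_{n+1})(cB_{n+1} + Bₙ)²). -/
theorem intermediate_convergent_error (n : ℕ) (hn : Odd n)
    (An An1 Bn Bn1 ζ ξ : ℝ) (a : ℕ → ℕ) (c : ℕ)
    (hc1 : 1 ≤ c) (hc2 : c < a (n + 2))
    (hBn : 0 < Bn) (hBn1 : 0 < Bn1) (hζ : (c : ℝ) < ζ)
    (hdet : An1 * Bn - An * Bn1 = (-1 : ℝ) ^ n)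
    (hξ : ξ = (ζ * An1 + An) / (ζ * Bn1 + Bn)) :
    (c * An1 + An) / (c * Bn1 + Bn) - ξ =
      (ζ - c) * (c + Bn / Bn1) /
        ((ζ + Bn / Bn1) * (c * Bn1 + Bn) ^ 2) := by
  have hcpos : (0:ℝ) ≤ (c:ℝ) := Nat.cast_nonneg c
  have hζpos : (0:ℝ) < ζ := lt_of_le_of_lt hcpos hζ
  have h1 : (0:ℝ) < (c:ℝ) * Bn1 + Bn := by positivity
  have h2 : (0:ℝ) < ζ * Bn1 + Bn := by positivity
  have hpow : ((-1:ℝ)) ^ n = -1 := hn.neg_one_pow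
  rw [hpow] at hdet
  subst hξ
  have stepA : (↑c * An1 + An) / (↑c * Bn1 + Bn) - (ζ * An1 + An) / (ζ * Bn1 + Bn)
      = (ζ - c) / ((↑c * Bn1 + Bn) * (ζ * Bn1 + Bn)) := by
    rw [div_sub_div _ _ h1.ne' h2.ne']
    congr 1
    linear_combination (↑c - ζ) * hdet
  rw [stepA]
  rw [div_eq_div_iff (by positivity) (by positivity)]
  field_simp
end
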